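/- arXiv:1612.09512 — 3 statements merged into one kernel-verified Lean document; each statement's English description precedes it below -/
import Mathlib

section
/- Let L₁,…,L_m and H be matrices on ℂ^d, and δ ≥ 0. Define A₀ = I − (δ/2)Σ_j L_j†L_j − iδH and A_j = √δ·L_j for j = 1,…,m. Then ‖Σ_{j=0}^m A_j†A_j − I‖ ≤ δ²·(Σ_j ‖L_j‖² + ‖H‖)², where ‖·‖ is the operator norm. -/
open scoped ComplexOrder Matrix

/-- The trace norm `‖A‖₁ = Tr √(AᴴA)` of a complex square matrix. -/
noncomputable def traceNorm {n : Type*} [Fintype n] [DecidableEq n]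
    (A : Matrix n n ℂ) : ℝ :=
  ((Matrix.posSemidef_conjTranspose_mul_self A).1.eigenvectorUnitary.1 *
      Matrix.diagonal ((fun x : ℝ => (x : ℂ)) ∘ (√·) ∘ (Matrix.posSemidef_conjTranspose_mul_self A).1.eigenvalues) *
      (star (Matrix.posSemidef_conjTranspose_mul_self A).1.eigenvectorUnitary.1 :
        Matrix n n ℂ)).trace.re

/-- The operator norm (largest singular value) of a complex square matrix. -/
noncomputable def opNorm {n : Type*} [Fintype n] [DecidableEq n]
    (A : Matrix n n ℂ) : ℝ :=
  ‖LinearMap.toContinuousLinearMap (Matrix.toEuclideanLin A)‖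

/-!
Write `S = ∑ⱼ Lⱼ⋆Lⱼ` and `B = S/2 + iH`, so that `A₀ = 1 - δB`. Since `S` and `H` are
self-adjoint, `B⋆ + B = S`, and the first-order terms of `A₀⋆A₀ = 1 - δ(B⋆ + B) + δ²B⋆B` cancel
against `∑ⱼ Aⱼ⋆Aⱼ = δS`. The defect is therefore exactly `δ²B⋆B`, whose norm is
`δ²‖B‖² ≤ δ²(‖S‖/2 + ‖H‖)²` by the C⋆-identity, and `‖S‖ ≤ ∑ⱼ ‖Lⱼ‖²` by the same identity.
-/

open Complex

section Algebra

variable {E : Type*} [Ring E] [StarRing E] [Algebra ℂ E] [StarModule ℂ E]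

lemma star_one_sub_smul_mul_one_sub_smul (B : E) (δ : ℝ) :
    star (1 - (δ : ℂ) • B) * (1 - (δ : ℂ) • B)
      = 1 - (δ : ℂ) • (star B + B) + ((δ : ℂ) ^ 2) • (star B * B) := by
  simp only [star_sub, star_one, star_smul, star_def, conj_ofReal, sub_mul,
    mul_sub, one_mul, mul_one, smul_mul_assoc, mul_smul_comm]
  module

lemma star_add_self_half_smul_add_I_smul {S H : E} (hS : IsSelfAdjoint S)
    (hH : IsSelfAdjoint H) : star ((1 / 2 : ℂ) • S + I • H) + ((1 / 2 : ℂ) • S + I • H) = S := by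
  simp only [star_add, star_smul, hS.star_eq, hH.star_eq, star_def, map_div₀, map_one,
    map_ofNat, conj_I]
  module

lemma star_mul_self_add_smul_sub_one_eq {S H : E} (hS : IsSelfAdjoint S)
    (hH : IsSelfAdjoint H) (δ : ℝ) :
    star (1 - ((δ : ℂ) / 2) • S - (I * δ) • H) * (1 - ((δ : ℂ) / 2) • S - (I * δ) • H)
        + (δ : ℂ) • S - 1
      = ((δ : ℂ) ^ 2) • (star ((1 / 2 : ℂ) • S + I • H) * ((1 / 2 : ℂ) • S + I • H)) := by
  have hA₀ : 1 - ((δ : ℂ) / 2) • S - (I * δ) • H = 1 - (δ : ℂ) • ((1 / 2 : ℂ) • S + I • H) := by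
    module
  rw [hA₀, star_one_sub_smul_mul_one_sub_smul, star_add_self_half_smul_add_I_smul hS hH]
  abel

end Algebra

lemma norm_sum_star_mul_self_le {E ι : Type*} [NonUnitalNormedRing E] [StarRing E] [CStarRing E]
    (s : Finset ι) (L : ι → E) :
    ‖∑ j ∈ s, star (L j) * L j‖ ≤ ∑ j ∈ s, ‖L j‖ ^ 2 :=
  (norm_sum_le _ _).trans <| Finset.sum_le_sum fun j _ => by
    rw [CStarRing.norm_star_mul_self, sq]

lemma norm_half_smul_add_I_smul_le {E : Type*} [SeminormedAddCommGroup E] [NormedSpace ℂ E]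
    (S H : E) : ‖(1 / 2 : ℂ) • S + I • H‖ ≤ ‖S‖ / 2 + ‖H‖ :=
  (norm_add_le _ _).trans_eq <| by simp [norm_smul, div_eq_inv_mul]

theorem norm_kraus_defect_le {E ι : Type*} [NormedRing E] [StarRing E] [CStarRing E]
    [NormedAlgebra ℂ E] [StarModule ℂ E] [Fintype ι] {H : E} (hH : IsSelfAdjoint H)
    (L : ι → E) {δ : ℝ} (hδ : 0 ≤ δ) :
    ‖star (1 - ((δ : ℂ) / 2) • (∑ j, star (L j) * L j) - (I * δ) • H)
          * (1 - ((δ : ℂ) / 2) • (∑ j, star (L j) * L j) - (I * δ) • H)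
        + (∑ j, star (((√δ : ℝ) : ℂ) • L j) * (((√δ : ℝ) : ℂ) • L j)) - 1‖
      ≤ δ ^ 2 * ((∑ j, ‖L j‖ ^ 2) + ‖H‖) ^ 2 := by
  set S := ∑ j, star (L j) * L j
  have hS : IsSelfAdjoint S :=
    isSelfAdjoint_sum _ fun j _ => IsSelfAdjoint.star_mul_self (L j)
  have hsum : ∑ j, star (((√δ : ℝ) : ℂ) • L j) * (((√δ : ℝ) : ℂ) • L j) = (δ : ℂ) • S := by
    simp only [star_smul, star_def, conj_ofReal, smul_mul_assoc, mul_smul_comm,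
      smul_smul, ← ofReal_mul, Real.mul_self_sqrt hδ, S, Finset.smul_sum]
  have hB : ‖(1 / 2 : ℂ) • S + I • H‖ ≤ (∑ j, ‖L j‖ ^ 2) + ‖H‖ := by
    have := norm_sum_star_mul_self_le Finset.univ L
    have := norm_nonneg S
    linarith [norm_half_smul_add_I_smul_le S H]
  rw [hsum, star_mul_self_add_smul_sub_one_eq hS hH, norm_smul, CStarRing.norm_star_mul_self,
    ← ofReal_pow, norm_real, Real.norm_of_nonneg (sq_nonneg δ), ← sq]
  gcongr

open scoped Matrix.Norms.L2Operator

/-- The Kraus operators `A₀ = I − (δ/2)∑ⱼ Lⱼᴴ Lⱼ − iδH`, `Aⱼ = √δ·Lⱼ` approximately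
satisfy the trace-preserving condition:
`‖∑ⱼ AⱼᴴAⱼ − I‖ ≤ δ²(∑ⱼ‖Lⱼ‖² + ‖H‖)²`. -/
theorem kraus_approx_trace_preserving {d m : ℕ} (H : Matrix (Fin d) (Fin d) ℂ)
    (hH : H.IsHermitian) (L : Fin m → Matrix (Fin d) (Fin d) ℂ) (δ : ℝ) (hδ : 0 ≤ δ)
    (A₀ : Matrix (Fin d) (Fin d) ℂ)
    (hA₀ : A₀ = 1 - ((δ : ℂ)/2) • (∑ j, (L j)ᴴ * L j) - (Complex.I * (δ : ℂ)) • H)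
    (A : Fin m → Matrix (Fin d) (Fin d) ℂ)
    (hA : ∀ j, A j = ((Real.sqrt δ : ℝ) : ℂ) • L j) :
    opNorm (A₀ᴴ * A₀ + (∑ j, (A j)ᴴ * A j) - 1)
      ≤ δ ^ 2 * ((∑ j, opNorm (L j) ^ 2) + opNorm H) ^ 2 := by
  subst hA₀
  simp only [hA]
  exact norm_kraus_defect_le hH L hδ
end

section
/- Let J be a Hermitian matrix on ℂ^d ⊗ ℂ^{2ⁿ} with ‖J‖ ≤ 1 whose (0,0) block vanishes, i.e., (⟨0|⊗I) J (|0⟩⊗I) = 0. Then for any unit vector |ψ⟩ ∈ ℂ^{2ⁿ} and 0 < δ ≤ 1, one can write e^{−iJδ}(|0⟩⊗|ψ⟩) = |0⟩⊗|ψ⟩ − iδ′|Ψ⊥⟩ + δ″|Φ⟩ where (|0⟩⟨0|⊗I)|Ψ⊥⟩ = 0, |Ψ⊥⟩ and |Φ⟩ are unit vectors (or zero), 0 ≤ δ′ ≤ δ, and 0 ≤ δ″ ≤ e^δ − 1 − δ. -/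
open scoped ComplexOrder Matrix

/-- The Euclidean norm of a finite-dimensional complex vector. -/
noncomputable def vnorm {ι : Type*} [Fintype ι] (v : ι → ℂ) : ℝ :=
  Real.sqrt (∑ x, Complex.normSq (v x))

/-- The tensor product of two vectors: `(u ⊗ v) (i,j) = u i * v j`. -/
def tvec {m d : Type*} (u : m → ℂ) (v : d → ℂ) : m × d → ℂ := fun p => u p.1 * v p.2

/-!
Put `A = -iδJ` and `v = |0⟩ ⊗ ψ`, and split `e^A v = v + A v + (e^A - 1 - A) v`.
Because the `(0,0)` block of `J` vanishes, `J v` has no component in the `|0⟩` sector, and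
`‖J v‖ ≤ ‖J‖ ≤ 1`, so `A v = -iδ' Ψ⊥` with `δ' = δ ‖J v‖ ≤ δ`. Comparing the tail of the
exponential series termwise with that of `e^‖A‖` bounds the remainder by `e^δ - 1 - δ`.
Both vectors are then normalised.
-/

open Nat NormedSpace

theorem norm_exp_sub_one_sub_le {𝕂 𝔸 : Type*} [RCLike 𝕂] [NormedRing 𝔸] [NormedAlgebra 𝕂 𝔸]
    [CompleteSpace 𝔸] {x : 𝔸} {r : ℝ} (hx : ‖x‖ ≤ r) :
    ‖exp x - 1 - x‖ ≤ Real.exp r - 1 - r := by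
  have hx_sum : HasSum (fun k => ((k + 2)! ⁻¹ : 𝕂) • x ^ (k + 2)) (exp x - 1 - x) := by
    have := (hasSum_nat_add_iff' 2).mpr (exp_series_hasSum_exp' (𝕂 := 𝕂) x)
    simpa [Finset.sum_range_succ, sub_sub] using this
  have hr_sum : HasSum (fun k => r ^ (k + 2) / (k + 2)!) (Real.exp r - 1 - r) := by
    have := (hasSum_nat_add_iff' 2).mpr (expSeries_div_hasSum_exp r)
    simpa [Finset.sum_range_succ, sub_sub, ← Real.exp_eq_exp_ℝ] using this
  refine hx_sum.norm_le_of_bounded hr_sum fun k => ?_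
  rw [norm_smul, norm_inv, RCLike.norm_natCast, inv_mul_eq_div]
  gcongr
  exact (norm_pow_le' x (by omega)).trans (pow_le_pow_left₀ (norm_nonneg x) hx _)

section vnorm

variable {ι : Type*} [Fintype ι]

theorem vnorm_eq_norm_toLp (v : ι → ℂ) : vnorm v = ‖WithLp.toLp 2 v‖ := by
  simp only [vnorm, EuclideanSpace.norm_eq, Complex.sq_norm]

theorem vnorm_nonneg (v : ι → ℂ) : 0 ≤ vnorm v :=
  Real.sqrt_nonneg _

theorem vnorm_eq_zero {v : ι → ℂ} : vnorm v = 0 ↔ v = 0 := by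
  rw [vnorm_eq_norm_toLp, norm_eq_zero, WithLp.toLp_eq_zero]

theorem vnorm_smul (c : ℂ) (v : ι → ℂ) : vnorm (c • v) = ‖c‖ * vnorm v := by
  rw [vnorm_eq_norm_toLp, vnorm_eq_norm_toLp, WithLp.toLp_smul, norm_smul]

theorem vnorm_tvec {κ : Type*} [Fintype κ] (u : ι → ℂ) (v : κ → ℂ) :
    vnorm (tvec u v) = vnorm u * vnorm v := by
  rw [vnorm, vnorm, vnorm, ← Real.sqrt_mul (Finset.sum_nonneg fun _ _ => Complex.normSq_nonneg _),
    Finset.sum_mul_sum, ← Finset.sum_product']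
  simp only [tvec, map_mul, Finset.univ_product_univ]

theorem vnorm_single_one [DecidableEq ι] (i : ι) : vnorm (Pi.single i (1 : ℂ)) = 1 := by
  simp [vnorm_eq_norm_toLp]

noncomputable def vnormalize (v : ι → ℂ) : ι → ℂ := ((vnorm v : ℂ))⁻¹ • v

theorem vnorm_smul_vnormalize (v : ι → ℂ) : (vnorm v : ℂ) • vnormalize v = v := by
  rcases eq_or_ne (vnorm v) 0 with h | h
  · simp [vnormalize, vnorm_eq_zero.mp h]
  · rw [vnormalize, smul_smul, mul_inv_cancel₀ (by exact_mod_cast h), one_smul]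

theorem vnorm_vnormalize (v : ι → ℂ) : vnorm (vnormalize v) = 1 ∨ vnormalize v = 0 := by
  rcases eq_or_ne (vnorm v) 0 with h | h
  · right
    simp [vnormalize, vnorm_eq_zero.mp h]
  · left
    rw [vnormalize, vnorm_smul, norm_inv, Complex.norm_real, Real.norm_of_nonneg (vnorm_nonneg v),
      inv_mul_cancel₀ h]

end vnorm

section opNorm

open scoped Matrix.Norms.L2Operator

variable {ι : Type*} [Fintype ι] [DecidableEq ι]

theorem opNorm_eq_l2_opNorm (A : Matrix ι ι ℂ) : opNorm A = ‖A‖ := rfl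

theorem opNorm_smul (c : ℂ) (A : Matrix ι ι ℂ) : opNorm (c • A) = ‖c‖ * opNorm A := by
  simp only [opNorm_eq_l2_opNorm, norm_smul]

theorem vnorm_mulVec_le (A : Matrix ι ι ℂ) (v : ι → ℂ) :
    vnorm (A *ᵥ v) ≤ opNorm A * vnorm v := by
  rw [vnorm_eq_norm_toLp, vnorm_eq_norm_toLp]
  exact A.l2_opNorm_mulVec (WithLp.toLp 2 v)

theorem vnorm_exp_sub_one_sub_mulVec_le {A : Matrix ι ι ℂ} {r : ℝ} (hA : opNorm A ≤ r)
    (v : ι → ℂ) : vnorm ((exp A - 1 - A) *ᵥ v) ≤ (Real.exp r - 1 - r) * vnorm v :=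
  (vnorm_mulVec_le _ v).trans <| mul_le_mul_of_nonneg_right
    (norm_exp_sub_one_sub_le (𝕂 := ℂ) (𝔸 := Matrix ι ι ℂ) hA) (vnorm_nonneg v)

end opNorm

theorem mulVec_tvec_single_apply {m κ : Type*} [Fintype m] [DecidableEq m] [Fintype κ]
    (J : Matrix (m × κ) (m × κ) ℂ) (i : m) (ψ : κ → ℂ) (p : m × κ) :
    (J *ᵥ tvec (Pi.single i 1) ψ) p = ∑ y, J p (i, y) * ψ y := by
  simp [Matrix.mulVec, dotProduct, Fintype.sum_prod_type, tvec, Pi.single_apply]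

theorem exp_block_offdiag_decomposition_general {d n : ℕ} [NeZero d]
    (J : Matrix (Fin d × Fin (2^n)) (Fin d × Fin (2^n)) ℂ)
    (hJn : opNorm J ≤ 1)
    (hblock : ∀ x y : Fin (2^n), J ((0 : Fin d), x) ((0 : Fin d), y) = 0)
    (ψ : Fin (2^n) → ℂ) (hψ : vnorm ψ = 1)
    (δ : ℝ) (hδ0 : 0 < δ) :
    ∃ (δ' δ'' : ℝ) (Ψperp Φ : Fin d × Fin (2^n) → ℂ),
      (NormedSpace.exp ((-(Complex.I * (δ : ℂ))) • J)).mulVec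
          (tvec (Pi.single (0 : Fin d) 1) ψ)
        = tvec (Pi.single (0 : Fin d) 1) ψ - (Complex.I * (δ' : ℂ)) • Ψperp
            + ((δ'' : ℝ) : ℂ) • Φ
      ∧ (∀ x : Fin (2^n), Ψperp (0, x) = 0)
      ∧ (vnorm Ψperp = 1 ∨ Ψperp = 0)
      ∧ (vnorm Φ = 1 ∨ Φ = 0)
      ∧ 0 ≤ δ' ∧ δ' ≤ δ
      ∧ 0 ≤ δ'' ∧ δ'' ≤ Real.exp δ - 1 - δ := by
  set v := tvec (Pi.single (0 : Fin d) 1) ψ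
  set A := (-(Complex.I * (δ : ℂ))) • J
  set w := J *ᵥ v
  set u := (exp A - 1 - A) *ᵥ v
  have hv : vnorm v = 1 := by rw [vnorm_tvec, vnorm_single_one, hψ, one_mul]
  have hw : vnorm w ≤ 1 := (vnorm_mulVec_le J v).trans (by rw [hv, mul_one]; exact hJn)
  have hA : opNorm A ≤ δ := by
    rw [opNorm_smul, norm_neg, norm_mul, Complex.norm_I, one_mul, Complex.norm_real,
      Real.norm_of_nonneg hδ0.le]
    exact mul_le_of_le_one_right hδ0.le hJn
  have hu : vnorm u ≤ Real.exp δ - 1 - δ := by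
    simpa [hv] using vnorm_exp_sub_one_sub_mulVec_le hA v
  have hexp : exp A *ᵥ v = v - (Complex.I * ((δ * vnorm w : ℝ) : ℂ)) • vnormalize w
      + (vnorm u : ℂ) • vnormalize u := by
    rw [vnorm_smul_vnormalize, Complex.ofReal_mul, ← mul_assoc, ← smul_smul,
      vnorm_smul_vnormalize]
    have hAv : A *ᵥ v = -(Complex.I * δ) • w := Matrix.smul_mulVec _ _ _
    simp only [u, Matrix.sub_mulVec, Matrix.one_mulVec, hAv, neg_smul]
    abel
  refine ⟨δ * vnorm w, vnorm u, vnormalize w, vnormalize u, hexp, fun x => ?_,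
    vnorm_vnormalize w, vnorm_vnormalize u, mul_nonneg hδ0.le (vnorm_nonneg w),
    mul_le_of_le_one_right hδ0.le hw, vnorm_nonneg u, hu⟩
  simp [vnormalize, w, v, mulVec_tvec_single_apply, hblock]

/-- Short-time evolution of a product state under a Hamiltonian with vanishing `(0,0)`
block: `e^{−iJδ}(|0⟩⊗|ψ⟩) = |0⟩⊗|ψ⟩ − iδ′|Ψ⊥⟩ + δ″|Φ⟩` with `|Ψ⊥⟩` orthogonal to the
`|0⟩` ancilla sector, `0 ≤ δ′ ≤ δ` and `0 ≤ δ″ ≤ e^δ − 1 − δ`. -/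
theorem exp_block_offdiag_decomposition {d n : ℕ} [NeZero d]
    (J : Matrix (Fin d × Fin (2^n)) (Fin d × Fin (2^n)) ℂ)
    (hJ : J.IsHermitian) (hJn : opNorm J ≤ 1)
    (hblock : ∀ x y : Fin (2^n), J ((0 : Fin d), x) ((0 : Fin d), y) = 0)
    (ψ : Fin (2^n) → ℂ) (hψ : vnorm ψ = 1)
    (δ : ℝ) (hδ0 : 0 < δ) (hδ1 : δ ≤ 1) :
    ∃ (δ' δ'' : ℝ) (Ψperp Φ : Fin d × Fin (2^n) → ℂ),
      (NormedSpace.exp ((-(Complex.I * (δ : ℂ))) • J)).mulVec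
          (tvec (Pi.single (0 : Fin d) 1) ψ)
        = tvec (Pi.single (0 : Fin d) 1) ψ - (Complex.I * (δ' : ℂ)) • Ψperp
            + ((δ'' : ℝ) : ℂ) • Φ
      ∧ (∀ x : Fin (2^n), Ψperp (0, x) = 0)
      ∧ (vnorm Ψperp = 1 ∨ Ψperp = 0)
      ∧ (vnorm Φ = 1 ∨ Φ = 0)
      ∧ 0 ≤ δ' ∧ δ' ≤ δ
      ∧ 0 ≤ δ'' ∧ δ'' ≤ Real.exp δ - 1 - δ :=
  exp_block_offdiag_decomposition_general J hJn hblock ψ hψ δ hδ0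
end

section
/- Let W be a unitary, P₀ and P₁ orthogonal projections, |Ψ⟩ a unit vector with P₁|Ψ⟩ = |Ψ⟩, and suppose W|Ψ⟩ = ½|Φ⟩ + (√3/2)|Φ⊥⟩ where P₀|Φ⟩ = |Φ⟩, P₀|Φ⊥⟩ = 0, ‖|Φ⊥⟩‖ = 1. Suppose further that P₁W†P₀W|Ψ⟩ = ¼|Ψ⟩ + |e⟩ with ‖|e⟩‖ ≤ ε. Then the oblivious amplitude amplification operator F = −W(I−2P₁)W†(I−2P₀)W satisfies ‖F|Ψ⟩ − |Φ⟩‖ ≤ 4ε. -/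
/-!
Since `P₁Ψ = Ψ` and `W` is unitary, expanding the two reflections gives the exact identity
`−W(I−2P₁)W†(I−2P₀)WΨ = 2P₀WΨ + WΨ − 4WP₁W†P₀WΨ`. Substituting `P₀WΨ = ½Φ` and
`P₁W†P₀WΨ = ¼Ψ + e` turns the right-hand side into `Φ − 4We`, and `‖We‖ = ‖e‖`.
-/

namespace ContinuousLinearMap

variable {𝕜 H : Type*} [RCLike 𝕜] [NormedAddCommGroup H] [InnerProductSpace 𝕜 H] [CompleteSpace H]

theorem adjoint_apply_apply_of_mem_unitary {W : H →L[𝕜] H} (hW : W ∈ unitary (H →L[𝕜] H))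
    (x : H) : adjoint W (W x) = x := by
  simpa [star_eq_adjoint] using congr($(Unitary.star_mul_self_of_mem hW) x)

theorem apply_adjoint_apply_of_mem_unitary {W : H →L[𝕜] H} (hW : W ∈ unitary (H →L[𝕜] H))
    (x : H) : W (adjoint W x) = x := by
  simpa [star_eq_adjoint] using congr($(Unitary.mul_star_self_of_mem hW) x)

theorem neg_reflection_sandwich_apply {W P₀ P₁ : H →L[𝕜] H} (hW : W ∈ unitary (H →L[𝕜] H))
    {Ψ : H} (hΨ : P₁ Ψ = Ψ) :
    (-(W ∘L ((1 - (2:𝕜) • P₁) ∘L (adjoint W ∘L ((1 - (2:𝕜) • P₀) ∘L W))))) Ψ =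
      (2:𝕜) • P₀ (W Ψ) + W Ψ - (4:𝕜) • W (P₁ (adjoint W (P₀ (W Ψ)))) := by
  simp only [neg_apply, comp_apply, sub_apply, one_apply_eq_self, smul_apply, map_sub, map_smul,
    hΨ, adjoint_apply_apply_of_mem_unitary hW, apply_adjoint_apply_of_mem_unitary hW]
  module

end ContinuousLinearMap

theorem oblivious_amplitude_amplification_general {E : Type*} [NormedAddCommGroup E]
    [InnerProductSpace ℂ E] [CompleteSpace E]
    (W P₀ P₁ : E →L[ℂ] E) (hW : W ∈ unitary (E →L[ℂ] E))
    (Ψ Φ Φperp e : E) (ε : ℝ)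
    (hP₁Ψ : P₁ Ψ = Ψ)
    (hWΨ : W Ψ = ((1:ℂ)/2) • Φ + ((Real.sqrt 3 / 2 : ℝ) : ℂ) • Φperp)
    (hΦ : P₀ Φ = Φ) (hΦperp : P₀ Φperp = 0)
    (he : P₁ ((ContinuousLinearMap.adjoint W) (P₀ (W Ψ))) = ((1:ℂ)/4) • Ψ + e)
    (hεe : ‖e‖ ≤ ε) :
    ‖(-(W ∘L ((1 - (2:ℂ) • P₁) ∘L ((ContinuousLinearMap.adjoint W) ∘L
        ((1 - (2:ℂ) • P₀) ∘L W))))) Ψ - Φ‖ ≤ 4 * ε := by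
  have hP₀WΨ : P₀ (W Ψ) = ((1:ℂ)/2) • Φ := by simp [hWΨ, hΦ, hΦperp]
  have hError : (2:ℂ) • ((1:ℂ)/2) • Φ + W Ψ - (4:ℂ) • W (((1:ℂ)/4) • Ψ + e) - Φ =
      -((4:ℂ) • W e) := by
    rw [map_add, map_smul]
    module
  rw [ContinuousLinearMap.neg_reflection_sandwich_apply hW hP₁Ψ, he, hP₀WΨ, hError, norm_neg,
    norm_smul, ContinuousLinearMap.norm_map_of_mem_unitary hW]
  norm_num
  linarith

/-- Oblivious amplitude amplification: if `W|Ψ⟩ = ½|Φ⟩ + (√3/2)|Φ⊥⟩` with `P₀|Φ⟩ = |Φ⟩`,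
`P₀|Φ⊥⟩ = 0`, `P₁|Ψ⟩ = |Ψ⟩`, and `P₁W†P₀W|Ψ⟩ = ¼|Ψ⟩ + |e⟩` with `‖e‖ ≤ ε`, then the
operator `F = −W(I−2P₁)W†(I−2P₀)W` satisfies `‖F|Ψ⟩ − |Φ⟩‖ ≤ 4ε`. -/
theorem oblivious_amplitude_amplification {E : Type*} [NormedAddCommGroup E]
    [InnerProductSpace ℂ E] [CompleteSpace E]
    (W P₀ P₁ : E →L[ℂ] E) (hW : W ∈ unitary (E →L[ℂ] E))
    (hP₀sa : IsSelfAdjoint P₀) (hP₀idem : P₀ ∘L P₀ = P₀)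
    (hP₁sa : IsSelfAdjoint P₁) (hP₁idem : P₁ ∘L P₁ = P₁)
    (Ψ Φ Φperp e : E) (ε : ℝ)
    (hΨ : ‖Ψ‖ = 1) (hP₁Ψ : P₁ Ψ = Ψ)
    (hWΨ : W Ψ = ((1:ℂ)/2) • Φ + ((Real.sqrt 3 / 2 : ℝ) : ℂ) • Φperp)
    (hΦ : P₀ Φ = Φ) (hΦperp : P₀ Φperp = 0) (hΦperpn : ‖Φperp‖ = 1)
    (he : P₁ ((ContinuousLinearMap.adjoint W) (P₀ (W Ψ))) = ((1:ℂ)/4) • Ψ + e)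
    (hεe : ‖e‖ ≤ ε) :
    ‖(-(W ∘L ((1 - (2:ℂ) • P₁) ∘L ((ContinuousLinearMap.adjoint W) ∘L
        ((1 - (2:ℂ) • P₀) ∘L W))))) Ψ - Φ‖ ≤ 4 * ε :=
  oblivious_amplitude_amplification_general W P₀ P₁ hW Ψ Φ Φperp e ε hP₁Ψ hWΨ hΦ hΦperp he hεe
end
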